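/- Under the convexity and qualification assumptions, let (m₁,π,u,γ,P) be a solution of the system (MFG), and set w(t,x,·) = m₁(t,x)π(t,x,·) for all (t,x) ∈ 𝒯×S, m₂ = m₁, and D = A[w]. Then (m₁,w,m₂,D) is a solution of (𝔓) and (u,γ,P) is a solution of (𝔇); moreover (m₁,w) is a solution of (P̃), (m₁,π) is a solution of (P), and (γ,P) is a solution of (D̃). -/

import Mathlib

noncomputable section
open Finset Filter Topology Bornology
open scoped Classical Pointwise

/-- Fenchel conjugate of a function on a finite coordinate space. -/
def conjFn {d : Type*} [Fintype d] (g : (d → ℝ) → EReal) (y : d → ℝ) : EReal :=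
  ⨆ x : d → ℝ, (↑(∑ i, x i * y i) : EReal) - g x

/-- Fenchel conjugate, scalar case. -/
def conjR (g : ℝ → EReal) (y : ℝ) : EReal :=
  ⨆ x : ℝ, (↑(x * y) : EReal) - g x

/-- Subdifferential (empty where `g = ⊤`). -/
def subdiffFn {d : Type*} [Fintype d] (g : (d → ℝ) → EReal) (x : d → ℝ) : Set (d → ℝ) :=
  {p | g x ≠ ⊤ ∧ ∀ x', g x + (↑(∑ i, p i * (x' i - x i)) : EReal) ≤ g x'}

def subdiffR (g : ℝ → EReal) (x : ℝ) : Set ℝ :=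
  {p | g x ≠ ⊤ ∧ ∀ x', g x + (↑(p * (x' - x)) : EReal) ≤ g x'}

def EProper {E : Type*} (g : E → EReal) : Prop := (∃ x, g x ≠ ⊤) ∧ ∀ x, g x ≠ ⊥

def EConvexOn {E : Type*} [AddCommMonoid E] [SMul ℝ E] (g : E → EReal) : Prop :=
  ∀ x y : E, ∀ a b : ℝ, 0 ≤ a → 0 ≤ b → a + b = 1 →
    g (a • x + b • y) ≤ (a : EReal) * g x + (b : EReal) * g y

def EStrictConvexOn {E : Type*} [AddCommMonoid E] [SMul ℝ E] (g : E → EReal) : Prop :=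
  ∀ x y : E, x ≠ y → g x ≠ ⊤ → g y ≠ ⊤ → ∀ a b : ℝ, 0 < a → 0 < b → a + b = 1 →
    g (a • x + b • y) < (a : EReal) * g x + (b : EReal) * g y

/-- Perspective function. -/
def persp {d : Type*} [Fintype d] (h : (d → ℝ) → EReal) (θ : ℝ) (x : d → ℝ) : EReal :=
  if 0 < θ then (θ : EReal) * h (θ⁻¹ • x)
  else if θ = 0 ∧ x = 0 then 0 else ⊤

/-- The simplex `Δ(S)`. -/
def simplex (n : ℕ) : Set (Fin n → ℝ) :=
  {ρ | (∀ y, ρ y ∈ Set.Icc (0 : ℝ) 1) ∧ ∑ y, ρ y = 1}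

abbrev Msp (T n : ℕ) := Fin (T + 1) → Fin n → ℝ
abbrev Wsp (T n : ℕ) := Fin T → Fin n → Fin n → ℝ
abbrev Psp (T : ℕ) := Fin T → ℝ
abbrev Csp (T n : ℕ) := Msp T n × Wsp T n × Msp T n × Psp T
abbrev Ksp (T n : ℕ) := Msp T n × Msp T n × Psp T
abbrev LSp (T n : ℕ) := Fin T → Fin n → (Fin n → ℝ) → EReal
abbrev FSp (T n : ℕ) := Fin (T + 1) → (Fin n → ℝ) → EReal
abbrev PhiSp (T : ℕ) := Fin T → ℝ → EReal
abbrev ASp (T n : ℕ) := Fin T → Fin n → Fin n → ℝ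

variable {T n : ℕ}

def opA (α : ASp T n) (w : Wsp T n) (t : Fin T) : ℝ := ∑ x, ∑ y, w t x y * α t x y

def opS (w : Wsp T n) (s : Fin (T + 1)) (x : Fin n) : ℝ :=
  if h : (s : ℕ) = 0 then 0
  else ∑ y, w ⟨(s : ℕ) - 1, by have := s.isLt; omega⟩ y x

def mbar0 (m0 : Fin n → ℝ) (s : Fin (T + 1)) (x : Fin n) : ℝ := if s = 0 then m0 x else 0

def Qcpl (α : ASp T n) (m : Msp T n) (π : Wsp T n) (t : Fin T) : ℝ :=
  ∑ x, ∑ y, m t.castSucc x * π t x y * α t x y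

def IsKol (m0 : Fin n → ℝ) (π : Wsp T n) (m : Msp T n) : Prop :=
  (∀ x, m 0 x = m0 x) ∧
    ∀ (t : Fin T) (x : Fin n), m t.succ x = ∑ y, m t.castSucc y * π t y x

def InDelta (π : Wsp T n) : Prop := ∀ t x, π t x ∈ simplex n

def ConvAssumption (ℓ : LSp T n) (F : FSp T n) (φ : PhiSp T) : Prop :=
  (∀ t x, EProper (ℓ t x) ∧ EConvexOn (ℓ t x) ∧ LowerSemicontinuous (ℓ t x) ∧
    ∀ ρ, ℓ t x ρ ≠ ⊤ → ρ ∈ simplex n) ∧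
  (∀ s, EProper (F s) ∧ EConvexOn (F s) ∧ LowerSemicontinuous (F s)) ∧
  (∀ t, EProper (φ t) ∧ EConvexOn (φ t) ∧ LowerSemicontinuous (φ t))

def Jpot (ℓ : LSp T n) (F : FSp T n) (φ : PhiSp T) (α : ASp T n)
    (m : Msp T n) (π : Wsp T n) : EReal :=
  (∑ t, ∑ x, (↑(m t.castSucc x) : EReal) * ℓ t x (π t x)) +
    (∑ t, φ t (Qcpl α m π t)) + ∑ s, F s (m s)

def Jtil (ℓ : LSp T n) (F : FSp T n) (φ : PhiSp T) (α : ASp T n)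
    (m : Msp T n) (w : Wsp T n) : EReal :=
  (∑ t, ∑ x, persp (ℓ t x) (m t.castSucc x) (w t x)) +
    (∑ t, φ t (opA α w t)) + ∑ s, F s (m s)

def FeasP (m0 : Fin n → ℝ) (p : Msp T n × Wsp T n) : Prop := InDelta p.2 ∧ IsKol m0 p.2 p.1

def FeasPt (m0 : Fin n → ℝ) (p : Msp T n × Wsp T n) : Prop :=
  ∀ s x, opS p.2 s x - p.1 s x + mbar0 m0 s x = 0

def valP (ℓ : LSp T n) (F : FSp T n) (φ : PhiSp T) (α : ASp T n) (m0 : Fin n → ℝ) : EReal :=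
  ⨅ p ∈ {p : Msp T n × Wsp T n | FeasP m0 p}, Jpot ℓ F φ α p.1 p.2

def valPt (ℓ : LSp T n) (F : FSp T n) (φ : PhiSp T) (α : ASp T n) (m0 : Fin n → ℝ) : EReal :=
  ⨅ p ∈ {p : Msp T n × Wsp T n | FeasPt m0 p}, Jtil ℓ F φ α p.1 p.2

def IsSolP (ℓ : LSp T n) (F : FSp T n) (φ : PhiSp T) (α : ASp T n) (m0 : Fin n → ℝ)
    (p : Msp T n × Wsp T n) : Prop :=
  FeasP m0 p ∧ ∀ q, FeasP m0 q → Jpot ℓ F φ α p.1 p.2 ≤ Jpot ℓ F φ α q.1 q.2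

def IsSolPt (ℓ : LSp T n) (F : FSp T n) (φ : PhiSp T) (α : ASp T n) (m0 : Fin n → ℝ)
    (p : Msp T n × Wsp T n) : Prop :=
  FeasPt m0 p ∧ ∀ q, FeasPt m0 q → Jtil ℓ F φ α p.1 p.2 ≤ Jtil ℓ F φ α q.1 q.2

def dpCost (ℓ : LSp T n) (α : ASp T n) (u : Msp T n) (P : Psp T)
    (t : Fin T) (x : Fin n) : EReal :=
  conjFn (ℓ t x) (fun y => -(α t x y * P t + u t.succ y))

def FeasD (ℓ : LSp T n) (α : ASp T n) (k : Ksp T n) : Prop :=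
  (∀ t x, (↑(k.1 t.castSucc x) : EReal) + dpCost ℓ α k.1 k.2.2 t x ≤ ↑(k.2.1 t.castSucc x)) ∧
  ∀ x, k.1 (Fin.last T) x = k.2.1 (Fin.last T) x

def Dobj (F : FSp T n) (φ : PhiSp T) (m0 : Fin n → ℝ) (k : Ksp T n) : EReal :=
  (↑(∑ x, m0 x * k.1 0 x) : EReal) - (∑ t, conjR (φ t) (k.2.2 t)) -
    ∑ s, conjFn (F s) (k.2.1 s)

def valD (ℓ : LSp T n) (F : FSp T n) (φ : PhiSp T) (α : ASp T n) (m0 : Fin n → ℝ) : EReal :=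
  ⨆ k ∈ {k : Ksp T n | FeasD ℓ α k}, Dobj F φ m0 k

def IsSolD (ℓ : LSp T n) (F : FSp T n) (φ : PhiSp T) (α : ASp T n) (m0 : Fin n → ℝ)
    (k : Ksp T n) : Prop :=
  FeasD ℓ α k ∧ ∀ k', FeasD ℓ α k' → Dobj F φ m0 k' ≤ Dobj F φ m0 k

/-- `IsDP ℓ α γ P u` : `u = U[γ,P]`, i.e. `u` solves the dynamic programming equation. -/
def IsDP (ℓ : LSp T n) (α : ASp T n) (γ : Msp T n) (P : Psp T) (u : Msp T n) : Prop :=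
  (∀ (t : Fin T) (x : Fin n),
    (↑(u t.castSucc x) : EReal) + dpCost ℓ α u P t x = ↑(γ t.castSucc x)) ∧
  ∀ x, u (Fin.last T) x = γ (Fin.last T) x

def valDt (ℓ : LSp T n) (F : FSp T n) (φ : PhiSp T) (α : ASp T n) (m0 : Fin n → ℝ) : EReal :=
  ⨆ k ∈ {k : Ksp T n | IsDP ℓ α k.2.1 k.2.2 k.1}, Dobj F φ m0 k

def IsSolDt (ℓ : LSp T n) (F : FSp T n) (φ : PhiSp T) (α : ASp T n) (m0 : Fin n → ℝ)
    (γ : Msp T n) (P : Psp T) (u : Msp T n) : Prop :=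
  IsDP ℓ α γ P u ∧
    ∀ γ' P' u', IsDP ℓ α γ' P' u' → Dobj F φ m0 (u', γ', P') ≤ Dobj F φ m0 (u, γ, P)

def IsKolPert (m0 : Fin n → ℝ) (ε1 : Msp T n) (π : Wsp T n) (m1 : Msp T n) : Prop :=
  (∀ x, m1 0 x = mbar0 m0 (0 : Fin (T + 1)) x + ε1 0 x) ∧
  ∀ (t : Fin T) (x : Fin n), m1 t.succ x = (∑ y, m1 t.castSucc y * π t y x) - ε1 t.succ x

def qnorm (ε1 ε2 : Msp T n) (ε3 : Psp T) : ℝ :=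
  Real.sqrt ((∑ s, ∑ x, ε1 s x ^ 2) + (∑ s, ∑ x, ε2 s x ^ 2) + ∑ t, ε3 t ^ 2)

def Qualif (ℓ : LSp T n) (F : FSp T n) (φ : PhiSp T) (α : ASp T n) (m0 : Fin n → ℝ) : Prop :=
  ∃ α0 : ℝ, 0 < α0 ∧ ∀ (ε1 ε2 : Msp T n) (ε3 : Psp T), qnorm ε1 ε2 ε3 ≤ α0 →
    ∃ π : Wsp T n, (∀ t x, ℓ t x (π t x) ≠ ⊤) ∧
      ∃ m1 : Msp T n, IsKolPert m0 ε1 π m1 ∧ (∀ s x, 0 ≤ m1 s x) ∧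
        (∀ s, F s (fun x => m1 s x + ε2 s x) ≠ ⊤) ∧
        ∀ t, φ t (Qcpl α m1 π t + ε3 t) ≠ ⊤

def Fobj (ℓ : LSp T n) (F : FSp T n) (φ : PhiSp T) (c : Csp T n) : EReal :=
  (∑ t, ∑ x, persp (ℓ t x) (c.1 t.castSucc x) (c.2.1 t x)) +
    (∑ t, φ t (c.2.2.2 t)) + ∑ s, F s (c.2.2.1 s)

def Gobj (m0 : Fin n → ℝ) (k : Ksp T n) : EReal :=
  if (∀ s x, k.1 s x = -(mbar0 m0 s x)) ∧ k.2.1 = 0 ∧ k.2.2 = 0 then 0 else ⊤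

def Aop (α : ASp T n) (c : Csp T n) : Ksp T n :=
  (fun s x => opS c.2.1 s x - c.1 s x,
   fun s x => c.1 s x - c.2.2.1 s x,
   fun t => opA α c.2.1 t - c.2.2.2 t)

def AstarOp (α : ASp T n) (k : Ksp T n) : Csp T n :=
  (fun s x => k.2.1 s x - k.1 s x,
   fun t x y => α t x y * k.2.2 t + k.1 t.succ y,
   fun s x => -k.2.1 s x,
   fun t => -k.2.2 t)

def cpair (c c' : Csp T n) : ℝ :=
  (∑ s, ∑ x, c.1 s x * c'.1 s x) + (∑ t, ∑ x, ∑ y, c.2.1 t x y * c'.2.1 t x y) +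
    (∑ s, ∑ x, c.2.2.1 s x * c'.2.2.1 s x) + ∑ t, c.2.2.2 t * c'.2.2.2 t

def kpair (k k' : Ksp T n) : ℝ :=
  (∑ s, ∑ x, k.1 s x * k'.1 s x) + (∑ s, ∑ x, k.2.1 s x * k'.2.1 s x) +
    ∑ t, k.2.2 t * k'.2.2 t

def FobjStar (ℓ : LSp T n) (F : FSp T n) (φ : PhiSp T) (c' : Csp T n) : EReal :=
  ⨆ c : Csp T n, (↑(cpair c c') : EReal) - Fobj ℓ F φ c

def GobjStar (m0 : Fin n → ℝ) (k : Ksp T n) : EReal := ↑(-(∑ x, m0 x * k.1 0 x))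

def PfrakObj (ℓ : LSp T n) (F : FSp T n) (φ : PhiSp T) (α : ASp T n) (m0 : Fin n → ℝ)
    (c : Csp T n) : EReal := Fobj ℓ F φ c + Gobj m0 (Aop α c)

def DfrakObj (ℓ : LSp T n) (F : FSp T n) (φ : PhiSp T) (α : ASp T n) (m0 : Fin n → ℝ)
    (k : Ksp T n) : EReal := FobjStar ℓ F φ (-AstarOp α k) + GobjStar m0 k

def IsSolPfrak (ℓ : LSp T n) (F : FSp T n) (φ : PhiSp T) (α : ASp T n) (m0 : Fin n → ℝ)
    (c : Csp T n) : Prop := ∀ c', PfrakObj ℓ F φ α m0 c ≤ PfrakObj ℓ F φ α m0 c'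

def IsSolDfrak (ℓ : LSp T n) (F : FSp T n) (φ : PhiSp T) (α : ASp T n) (m0 : Fin n → ℝ)
    (k : Ksp T n) : Prop := ∀ k', DfrakObj ℓ F φ α m0 k ≤ DfrakObj ℓ F φ α m0 k'

def MFGi (ℓ : LSp T n) (α : ASp T n) (γ : Msp T n) (P : Psp T) (u : Msp T n) : Prop :=
  (∀ (t : Fin T) (x : Fin n), (↑(u t.castSucc x) : EReal) =
      ⨅ ρ ∈ simplex n,
        ℓ t x ρ + ↑(γ t.castSucc x) + ↑(∑ y, ρ y * (α t x y * P t + u t.succ y))) ∧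
  ∀ x, u (Fin.last T) x = γ (Fin.last T) x

def MFGii (ℓ : LSp T n) (α : ASp T n) (π : Wsp T n) (γ : Msp T n) (P : Psp T)
    (u : Msp T n) : Prop :=
  ∀ (t : Fin T) (x : Fin n),
    ℓ t x (π t x) + ↑(γ t.castSucc x) + ↑(∑ y, π t x y * (α t x y * P t + u t.succ y)) =
      (↑(u t.castSucc x) : EReal)

def IsMFGSol (ℓ : LSp T n) (F : FSp T n) (φ : PhiSp T) (α : ASp T n) (m0 : Fin n → ℝ)
    (m : Msp T n) (π : Wsp T n) (u : Msp T n) (γ : Msp T n) (P : Psp T) : Prop :=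
  InDelta π ∧ MFGi ℓ α γ P u ∧ MFGii ℓ α π γ P u ∧ IsKol m0 π m ∧
    (∀ s, γ s ∈ subdiffFn (F s) (m s)) ∧ ∀ t, P t ∈ subdiffR (φ t) (Qcpl α m π t)

/-!
(𝔓) and (𝔇) form a Fenchel–Rockafellar pair. For any `c` and any `(u, γ, P)` solving the
dynamic programming equation `u = U[γ, P]`, the pairing `⟨c, -𝓐*(u, γ, P)⟩` splits into terms
each bounded by a Fenchel–Young inequality: for the perspective of `ℓ` (whose conjugate at
`-(α P + u(t+1))` is `γ - u`), for `φ` and for `F`. When `𝓐 c = (-m̄₀, 0, 0)` the adjoint identity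
turns the pairing into `⟨m₀, u(0)⟩`, which gives weak duality `D̃(γ, P) ≤ 𝓕(c)`. At a solution of
(MFG) every one of these inequalities is an equality: (iv) and (v) are the equality cases for `F`
and `φ`, and (i)–(ii) make `-(α P + u(t+1))` a subgradient of `ℓ(t, x, ·)` at `π(t, x, ·)`. So the
duality gap vanishes, which makes each of the candidates optimal; (P) reduces to (P̃) since
`ℓ̃(m, m ρ) = m ℓ(ρ)` for `m ≥ 0`.
-/

@[simp, norm_cast]
lemma EReal.coe_finset_sum {ι : Type*} (s : Finset ι) (f : ι → ℝ) :
    ((∑ i ∈ s, f i : ℝ) : EReal) = ∑ i ∈ s, (f i : EReal) :=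
  map_sum (⟨⟨(↑), EReal.coe_zero⟩, EReal.coe_add⟩ : ℝ →+ EReal) f s

lemma EReal.finset_sum_ne_bot {ι : Type*} {s : Finset ι} {f : ι → EReal}
    (h : ∀ i ∈ s, f i ≠ ⊥) : ∑ i ∈ s, f i ≠ ⊥ :=
  Finset.sum_induction f (· ≠ ⊥) (fun _ _ ha hb => EReal.add_ne_bot_iff.2 ⟨ha, hb⟩)
    EReal.zero_ne_bot h

-- `conjFn g y` and `conjR g y` are suprema of this shape, `f` being the pairing with `y`.
section Conjugate

variable {E : Type*} {f : E → ℝ} {g : E → EReal}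

theorem iSup_coe_sub_ne_bot (hg : EProper g) : ⨆ x, ((f x : EReal) - g x) ≠ ⊥ := by
  obtain ⟨⟨x, hx⟩, hbot⟩ := hg
  refine ne_bot_of_le_ne_bot ?_ (le_iSup (fun x => (f x : EReal) - g x) x)
  rw [← EReal.coe_toReal hx (hbot x), ← EReal.coe_sub]
  exact EReal.coe_ne_bot _

theorem coe_le_add_iSup_coe_sub (hg : EProper g) (x : E) :
    (f x : EReal) ≤ g x + ⨆ x', ((f x' : EReal) - g x') := by
  rw [add_comm, ← EReal.sub_le_iff_le_add (.inl (hg.2 x)) (.inr (iSup_coe_sub_ne_bot hg))]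
  exact le_iSup (fun x' => (f x' : EReal) - g x') x

theorem iSup_coe_sub_eq {x : E} {r : ℝ} (hx : g x = r)
    (h : ∀ x', ((r + (f x' - f x) : ℝ) : EReal) ≤ g x') :
    ⨆ x', ((f x' : EReal) - g x') = ((f x - r : ℝ) : EReal) := by
  refine le_antisymm (iSup_le fun x' => EReal.sub_le_of_le_add' ?_) ?_
  · calc (f x' : EReal) = ((r + (f x' - f x) : ℝ) : EReal) + ((f x - r : ℝ) : EReal) := by
          rw [← EReal.coe_add]; ring_nf
      _ ≤ g x' + ((f x - r : ℝ) : EReal) := add_le_add_left (h x') _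
  · exact le_iSup_of_le x (by rw [hx, EReal.coe_sub])

end Conjugate

section FenchelYoung

variable {d : Type*} [Fintype d]

theorem coe_le_add_conjFn {g : (d → ℝ) → EReal} (hg : EProper g) (x y : d → ℝ) :
    ((∑ i, x i * y i : ℝ) : EReal) ≤ g x + conjFn g y :=
  coe_le_add_iSup_coe_sub (f := fun x => ∑ i, x i * y i) hg x

theorem coe_le_add_conjR {g : ℝ → EReal} (hg : EProper g) (x y : ℝ) :
    ((x * y : ℝ) : EReal) ≤ g x + conjR g y :=
  coe_le_add_iSup_coe_sub (f := (· * y)) hg x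

theorem conjFn_eq_of_mem_subdiffFn {g : (d → ℝ) → EReal} {x p : d → ℝ} (hx : g x ≠ ⊥)
    (hp : p ∈ subdiffFn g x) :
    ∃ r : ℝ, g x = r ∧ conjFn g p = ((∑ i, x i * p i - r : ℝ) : EReal) := by
  obtain ⟨r, hr⟩ : ∃ r : ℝ, g x = r := ⟨_, (EReal.coe_toReal hp.1 hx).symm⟩
  refine ⟨r, hr, ?_⟩
  unfold conjFn
  refine iSup_coe_sub_eq (E := d → ℝ) (f := fun x => ∑ i, x i * p i) (g := g) (x := x) hr ?_
  intro x'
  have hsum : ∑ i, p i * (x' i - x i) = ∑ i, x' i * p i - ∑ i, x i * p i := by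
    rw [← Finset.sum_sub_distrib]; exact Finset.sum_congr rfl fun i _ => by ring
  simpa [hr, hsum] using hp.2 x'

theorem conjR_eq_of_mem_subdiffR {g : ℝ → EReal} {x p : ℝ} (hx : g x ≠ ⊥)
    (hp : p ∈ subdiffR g x) : ∃ r : ℝ, g x = r ∧ conjR g p = ((x * p - r : ℝ) : EReal) := by
  obtain ⟨r, hr⟩ : ∃ r : ℝ, g x = r := ⟨_, (EReal.coe_toReal hp.1 hx).symm⟩
  refine ⟨r, hr, ?_⟩
  unfold conjR
  refine iSup_coe_sub_eq (f := (· * p)) (g := g) (x := x) hr ?_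
  intro x'
  have := hp.2 x'
  rw [hr, ← EReal.coe_add] at this
  exact le_of_eq_of_le (by ring_nf) this

theorem persp_smul (h : (d → ℝ) → EReal) {θ : ℝ} (hθ : 0 ≤ θ) (ρ : d → ℝ) :
    persp h θ (θ • ρ) = θ * h ρ := by
  unfold persp
  rcases hθ.lt_or_eq with hpos | rfl
  · rw [if_pos hpos, smul_smul, inv_mul_cancel₀ hpos.ne', one_smul]
  · simp

theorem persp_ne_bot {h : (d → ℝ) → EReal} (hbot : ∀ z, h z ≠ ⊥) (θ : ℝ) (v : d → ℝ) :
    persp h θ v ≠ ⊥ := by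
  unfold persp
  split_ifs with hθ
  · by_cases htop : h (θ⁻¹ • v) = ⊤
    · simp [htop, EReal.coe_mul_top_of_pos hθ]
    · rw [← EReal.coe_toReal htop (hbot _), ← EReal.coe_mul]
      exact EReal.coe_ne_bot _
  all_goals simp

theorem coe_sub_mul_le_persp {h : (d → ℝ) → EReal} {b : d → ℝ} {c : ℝ}
    (hc : conjFn h b ≤ c) (θ : ℝ) (v : d → ℝ) :
    ((∑ i, v i * b i - θ * c : ℝ) : EReal) ≤ persp h θ v := by
  unfold persp
  split_ifs with hθ hzero
  · have key : ((∑ i, (θ⁻¹ • v) i * b i - c : ℝ) : EReal) ≤ h (θ⁻¹ • v) := by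
      rw [EReal.coe_sub]
      refine EReal.sub_le_of_le_add' ((EReal.sub_le_iff_le_add (.inr (EReal.coe_ne_top c))
        (.inr (EReal.coe_ne_bot c))).1 ?_)
      exact (le_iSup (fun x => ((∑ i, x i * b i : ℝ) : EReal) - h x) (θ⁻¹ • v)).trans hc
    calc ((∑ i, v i * b i - θ * c : ℝ) : EReal)
        = (θ : EReal) * ((∑ i, (θ⁻¹ • v) i * b i - c : ℝ) : EReal) := by
          rw [← EReal.coe_mul]
          congr 1
          simp only [Pi.smul_apply, smul_eq_mul, mul_assoc, ← Finset.mul_sum]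
          field_simp
      _ ≤ _ := mul_le_mul_of_nonneg_left key (EReal.coe_nonneg.2 hθ.le)
  · simp [hzero.1, hzero.2]
  · exact le_top

end FenchelYoung

section Operators

theorem opS_zero (w : Wsp T n) (x : Fin n) : opS w 0 x = 0 := by
  simp [opS]

theorem opS_succ (w : Wsp T n) (t : Fin T) (x : Fin n) : opS w t.succ x = ∑ y, w t y x := by
  simp [opS]

theorem sum_opS_mul (w : Wsp T n) (v : Msp T n) :
    ∑ s, ∑ x, opS w s x * v s x = ∑ t, ∑ x, ∑ y, w t x y * v t.succ y := by
  rw [Fin.sum_univ_succ]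
  simp only [opS_zero, zero_mul, Finset.sum_const_zero, zero_add, opS_succ, Finset.sum_mul]
  exact Finset.sum_congr rfl fun t _ => Finset.sum_comm

theorem cpair_neg (c c' : Csp T n) : cpair c (-c') = -cpair c c' := by
  simp only [cpair, Prod.fst_neg, Prod.snd_neg, Pi.neg_apply, mul_neg, Finset.sum_neg_distrib]
  ring

theorem cpair_AstarOp (α : ASp T n) (c : Csp T n) (k : Ksp T n) :
    cpair c (AstarOp α k) = kpair (Aop α c) k := by
  obtain ⟨m₁, w, m₂, D⟩ := c
  obtain ⟨u, γ, P⟩ := k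
  simp only [cpair, kpair, Aop, AstarOp, opA, sub_mul, mul_sub, mul_add, mul_neg,
    Finset.sum_sub_distrib, Finset.sum_add_distrib, Finset.sum_neg_distrib, sum_opS_mul,
    Finset.sum_mul, mul_assoc]
  ring

theorem kpair_neg_mbar0 (m0 : Fin n → ℝ) (k : Ksp T n) :
    kpair (-mbar0 m0, 0, 0) k = -∑ x, m0 x * k.1 0 x := by
  simp [kpair, mbar0]

theorem cpair_neg_AstarOp_of_Aop_eq {α : ASp T n} {m0 : Fin n → ℝ} {c : Csp T n}
    (hc : Aop α c = (-mbar0 m0, 0, 0)) (k : Ksp T n) :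
    cpair c (-AstarOp α k) = ∑ x, m0 x * k.1 0 x := by
  rw [cpair_neg, cpair_AstarOp, hc, kpair_neg_mbar0, neg_neg]

theorem cpair_neg_AstarOp_eq (α : ASp T n) (c : Csp T n) {u γ : Msp T n} (P : Psp T)
    (hu : ∀ x, u (Fin.last T) x = γ (Fin.last T) x) :
    cpair c (-AstarOp α (u, γ, P)) =
      (∑ t, ∑ x, (∑ y, c.2.1 t x y * -(α t x y * P t + u t.succ y) -
        c.1 t.castSucc x * (γ t.castSucc x - u t.castSucc x))) +
      (∑ t, c.2.2.2 t * P t) + ∑ s, ∑ x, c.2.2.1 s x * γ s x := by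
  have hlast : ∑ s, ∑ x, c.1 s x * (u s x - γ s x) =
      ∑ t : Fin T, ∑ x, c.1 t.castSucc x * (u t.castSucc x - γ t.castSucc x) := by
    simp [Fin.sum_univ_castSucc, hu]
  simp only [cpair, AstarOp, Prod.fst_neg, Prod.snd_neg, Pi.neg_apply, neg_sub, neg_neg]
  rw [hlast]
  simp only [mul_sub, Finset.sum_sub_distrib]
  ring

theorem Gobj_eq (m0 : Fin n → ℝ) (k : Ksp T n) :
    Gobj m0 k = if k = (-mbar0 m0, 0, 0) then 0 else ⊤ := by
  simp only [Gobj, Prod.ext_iff, funext_iff, Pi.neg_apply, Pi.zero_apply]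

end Operators

section Kolmogorov

variable {m0 : Fin n → ℝ} {π : Wsp T n} {m : Msp T n}

theorem IsKol.nonneg (hm0 : m0 ∈ simplex n) (hπ : InDelta π) (hK : IsKol m0 π m)
    (s : Fin (T + 1)) (x : Fin n) : 0 ≤ m s x := by
  induction s using Fin.induction generalizing x with
  | zero => rw [hK.1 x]; exact (hm0.1 x).1
  | succ t ih =>
    rw [hK.2 t x]
    exact Finset.sum_nonneg fun y _ => mul_nonneg (ih y) ((hπ t y).1 x).1

theorem IsKol.feasPt (hK : IsKol m0 π m) :
    FeasPt m0 (m, fun t x y => m t.castSucc x * π t x y) := by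
  intro s x
  induction s using Fin.cases with
  | zero => simp [opS_zero, mbar0, hK.1 x]
  | succ t => simp [opS_succ, mbar0, hK.2 t x, Fin.succ_ne_zero]

theorem FeasPt.Aop_eq {w : Wsp T n} (h : FeasPt m0 (m, w)) (α : ASp T n) :
    Aop α (m, w, m, opA α w) = (-mbar0 m0, 0, 0) := by
  refine Prod.ext (funext fun s => funext fun x => ?_) (Prod.ext ?_ ?_)
  · show opS w s x - m s x = -mbar0 m0 s x
    linarith [h s x]
  · exact funext fun s => funext fun x => sub_self (m s x)
  · exact funext fun t => sub_self (opA α w t)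

theorem Jpot_eq_Jtil (ℓ : LSp T n) (F : FSp T n) (φ : PhiSp T) (α : ASp T n)
    (hm : ∀ s x, 0 ≤ m s x) :
    Jpot ℓ F φ α m π = Jtil ℓ F φ α m (fun t x y => m t.castSucc x * π t x y) := by
  unfold Jpot Jtil
  congr 2
  exact Finset.sum_congr rfl fun t _ => Finset.sum_congr rfl fun x _ =>
    (persp_smul _ (hm _ _) _).symm

theorem IsSolPt.isSolP {ℓ : LSp T n} {F : FSp T n} {φ : PhiSp T} {α : ASp T n}
    (hm0 : m0 ∈ simplex n) (hπ : InDelta π) (hK : IsKol m0 π m)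
    (h : IsSolPt ℓ F φ α m0 (m, fun t x y => m t.castSucc x * π t x y)) :
    IsSolP ℓ F φ α m0 (m, π) := by
  refine ⟨⟨hπ, hK⟩, fun ⟨m', π'⟩ ⟨hπ', hK'⟩ => ?_⟩
  show Jpot ℓ F φ α m π ≤ Jpot ℓ F φ α m' π'
  rw [Jpot_eq_Jtil ℓ F φ α (hK.nonneg hm0 hπ), Jpot_eq_Jtil ℓ F φ α (hK'.nonneg hm0 hπ')]
  exact h.2 (m', fun t x y => m' t.castSucc x * π' t x y) hK'.feasPt

end Kolmogorov

section WeakDuality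

variable {ℓ : LSp T n} {F : FSp T n} {φ : PhiSp T} {α : ASp T n}
  {m0 : Fin n → ℝ} {u γ : Msp T n} {P : Psp T}

theorem IsDP.dpCost_eq (h : IsDP ℓ α γ P u) (t : Fin T) (x : Fin n) :
    dpCost ℓ α u P t x = ((γ t.castSucc x - u t.castSucc x : ℝ) : EReal) := by
  rw [← EReal.add_sub_cancel_left (a := dpCost ℓ α u P t x) (b := u t.castSucc x), h.1 t x,
    EReal.coe_sub]

theorem Fobj_ne_bot (hℓ : ∀ t x z, ℓ t x z ≠ ⊥) (hF : ∀ s z, F s z ≠ ⊥)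
    (hφ : ∀ t z, φ t z ≠ ⊥) (c : Csp T n) : Fobj ℓ F φ c ≠ ⊥ := by
  simp only [Fobj, EReal.add_ne_bot_iff]
  refine ⟨⟨?_, ?_⟩, ?_⟩ <;> refine EReal.finset_sum_ne_bot fun i _ => ?_
  · exact EReal.finset_sum_ne_bot fun x _ => persp_ne_bot (hℓ i x) _ _
  · exact hφ i _
  · exact hF i _

theorem coe_cpair_neg_AstarOp_le (hF : ∀ s, EProper (F s)) (hφ : ∀ t, EProper (φ t))
    (hk : IsDP ℓ α γ P u) (c : Csp T n) :
    (cpair c (-AstarOp α (u, γ, P)) : EReal) ≤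
      Fobj ℓ F φ c + (∑ t, conjR (φ t) (P t)) + ∑ s, conjFn (F s) (γ s) := by
  calc (cpair c (-AstarOp α (u, γ, P)) : EReal)
      = (∑ t, ∑ x, ((∑ y, c.2.1 t x y * -(α t x y * P t + u t.succ y) -
          c.1 t.castSucc x * (γ t.castSucc x - u t.castSucc x) : ℝ) : EReal)) +
        (∑ t, ((c.2.2.2 t * P t : ℝ) : EReal)) +
        ∑ s, ((∑ x, c.2.2.1 s x * γ s x : ℝ) : EReal) := by
        rw [cpair_neg_AstarOp_eq α c P hk.2]
        simp only [EReal.coe_add, EReal.coe_finset_sum]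
    _ ≤ (∑ t, ∑ x, persp (ℓ t x) (c.1 t.castSucc x) (c.2.1 t x)) +
        (∑ t, (φ t (c.2.2.2 t) + conjR (φ t) (P t))) +
        ∑ s, (F s (c.2.2.1 s) + conjFn (F s) (γ s)) := by
        gcongr with t _ x _ t _ s _
        · exact coe_sub_mul_le_persp (hk.dpCost_eq t x).le _ _
        · exact coe_le_add_conjR (hφ t) _ _
        · exact coe_le_add_conjFn (hF s) _ _
    _ = _ := by
        simp only [Fobj, Finset.sum_add_distrib]
        abel

theorem Dobj_le_Fobj (hF : ∀ s, EProper (F s)) (hφ : ∀ t, EProper (φ t))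
    (hk : IsDP ℓ α γ P u) {c : Csp T n} (hc : Aop α c = (-mbar0 m0, 0, 0)) :
    Dobj F φ m0 (u, γ, P) ≤ Fobj ℓ F φ c := by
  have h := coe_cpair_neg_AstarOp_le hF hφ hk c
  rw [cpair_neg_AstarOp_of_Aop_eq hc, add_right_comm] at h
  exact EReal.sub_le_of_le_add (EReal.sub_le_of_le_add h)

end WeakDuality

theorem Jtil_eq_Fobj (ℓ : LSp T n) (F : FSp T n) (φ : PhiSp T) (α : ASp T n) (m : Msp T n)
    (w : Wsp T n) : Jtil ℓ F φ α m w = Fobj ℓ F φ (m, w, m, opA α w) :=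
  rfl

/-- The last conjunct says `J̃(m, w) = D̃(γ, P)`, all terms being finite. -/
def HasZeroDualityGap (ℓ : LSp T n) (F : FSp T n) (φ : PhiSp T) (α : ASp T n)
    (m0 : Fin n → ℝ) (m : Msp T n) (w : Wsp T n) (u γ : Msp T n) (P : Psp T) : Prop :=
  FeasPt m0 (m, w) ∧ IsDP ℓ α γ P u ∧
    ∃ R a b : ℝ, Jtil ℓ F φ α m w = R ∧ ∑ t, conjR (φ t) (P t) = a ∧
      ∑ s, conjFn (F s) (γ s) = b ∧ R + a + b = ∑ x, m0 x * u 0 x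

section ZeroDualityGap

variable {ℓ : LSp T n} {F : FSp T n} {φ : PhiSp T} {α : ASp T n}
  {m0 : Fin n → ℝ} {m : Msp T n} {w : Wsp T n} {u γ : Msp T n} {P : Psp T}

theorem HasZeroDualityGap.Dobj_eq (h : HasZeroDualityGap ℓ F φ α m0 m w u γ P) :
    Dobj F φ m0 (u, γ, P) = Jtil ℓ F φ α m w := by
  obtain ⟨-, -, R, a, b, hR, ha, hb, hsum⟩ := h
  rw [Dobj, ha, hb, hR, ← hsum]
  norm_cast
  ring

theorem Dobj_le_Jtil (hF : ∀ s, EProper (F s)) (hφ : ∀ t, EProper (φ t))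
    (hk : IsDP ℓ α γ P u) {m' : Msp T n} {w' : Wsp T n} (hq : FeasPt m0 (m', w')) :
    Dobj F φ m0 (u, γ, P) ≤ Jtil ℓ F φ α m' w' := by
  rw [Jtil_eq_Fobj]
  exact Dobj_le_Fobj hF hφ hk (hq.Aop_eq α)

theorem HasZeroDualityGap.isSolPt (hF : ∀ s, EProper (F s)) (hφ : ∀ t, EProper (φ t))
    (h : HasZeroDualityGap ℓ F φ α m0 m w u γ P) : IsSolPt ℓ F φ α m0 (m, w) :=
  ⟨h.1, fun ⟨_, _⟩ hq => h.Dobj_eq ▸ Dobj_le_Jtil hF hφ h.2.1 hq⟩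

theorem HasZeroDualityGap.isSolDt (hF : ∀ s, EProper (F s)) (hφ : ∀ t, EProper (φ t))
    (h : HasZeroDualityGap ℓ F φ α m0 m w u γ P) : IsSolDt ℓ F φ α m0 γ P u :=
  ⟨h.2.1, fun _ _ _ hk => h.Dobj_eq ▸ Dobj_le_Jtil hF hφ hk h.1⟩

theorem HasZeroDualityGap.isSolPfrak (hℓ : ∀ t x z, ℓ t x z ≠ ⊥) (hF : ∀ s, EProper (F s))
    (hφ : ∀ t, EProper (φ t)) (h : HasZeroDualityGap ℓ F φ α m0 m w u γ P) :
    IsSolPfrak ℓ F φ α m0 (m, w, m, opA α w) := by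
  intro c
  rw [PfrakObj, PfrakObj, Gobj_eq, if_pos (h.1.Aop_eq α), add_zero, Gobj_eq]
  split_ifs with hc
  · rw [add_zero]
    calc Fobj ℓ F φ (m, w, m, opA α w) = Jtil ℓ F φ α m w := (Jtil_eq_Fobj ..).symm
      _ = Dobj F φ m0 (u, γ, P) := h.Dobj_eq.symm
      _ ≤ Fobj ℓ F φ c := Dobj_le_Fobj hF hφ h.2.1 hc
  · rw [EReal.add_top_of_ne_bot (Fobj_ne_bot hℓ (fun s => (hF s).2) (fun t => (hφ t).2) c)]
    exact le_top

theorem HasZeroDualityGap.isSolDfrak (hF : ∀ s, EProper (F s)) (hφ : ∀ t, EProper (φ t))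
    (h : HasZeroDualityGap ℓ F φ α m0 m w u γ P) : IsSolDfrak ℓ F φ α m0 (u, γ, P) := by
  obtain ⟨hc, hk, R, a, b, hR, ha, hb, hsum⟩ := h
  have hc' := hc.Aop_eq α
  intro k
  calc DfrakObj ℓ F φ α m0 (u, γ, P)
      ≤ ((a + b : ℝ) : EReal) + GobjStar m0 (u, γ, P) := by
        refine add_le_add_left (iSup_le fun c => EReal.sub_le_of_le_add' ?_) _
        rw [EReal.coe_add, ← ha, ← hb, ← add_assoc]
        exact coe_cpair_neg_AstarOp_le hF hφ hk c
    _ = ((∑ x, m0 x * k.1 0 x - R : ℝ) : EReal) + GobjStar m0 k := by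
        rw [GobjStar, GobjStar, ← EReal.coe_add, ← EReal.coe_add]
        congr 1
        linarith
    _ ≤ DfrakObj ℓ F φ α m0 k := by
        refine add_le_add_left (le_iSup_of_le (m, w, m, opA α w) ?_) _
        rw [cpair_neg_AstarOp_of_Aop_eq hc', EReal.coe_sub]
        exact le_of_eq (congrArg _ hR.symm)

end ZeroDualityGap

section MFG

variable {ℓ : LSp T n} {F : FSp T n} {φ : PhiSp T} {α : ASp T n}
  {m0 : Fin n → ℝ} {m : Msp T n} {π : Wsp T n} {u γ : Msp T n} {P : Psp T}

theorem MFGii.apply_eq (h : MFGii ℓ α π γ P u) (t : Fin T) (x : Fin n) :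
    ℓ t x (π t x) = ((u t.castSucc x - γ t.castSucc x -
      ∑ y, π t x y * (α t x y * P t + u t.succ y) : ℝ) : EReal) := by
  rw [← EReal.add_sub_cancel_right (a := ℓ t x (π t x)) (b := γ t.castSucc x),
    ← EReal.add_sub_cancel_right (a := ℓ t x (π t x) + _)
      (b := ∑ y, π t x y * (α t x y * P t + u t.succ y)), h t x, ← EReal.coe_sub,
    ← EReal.coe_sub]
  congr 1
  ring

/-- By (i) and (ii), `-(α P + u(t+1))` is a subgradient of `ℓ t x` at `π t x`, so Fenchel's
equality holds there. -/
theorem dpCost_eq_of_MFG {t : Fin T} {x : Fin n} (hdom : ∀ ρ, ℓ t x ρ ≠ ⊤ → ρ ∈ simplex n)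
    (hi : MFGi ℓ α γ P u) (hii : MFGii ℓ α π γ P u) :
    dpCost ℓ α u P t x = ((γ t.castSucc x - u t.castSucc x : ℝ) : EReal) := by
  have hneg : ∀ ρ : Fin n → ℝ, ∑ y, ρ y * -(α t x y * P t + u t.succ y) =
      -∑ y, ρ y * (α t x y * P t + u t.succ y) := by
    simp only [mul_neg, Finset.sum_neg_distrib, implies_true]
  unfold dpCost conjFn
  rw [iSup_coe_sub_eq (E := Fin n → ℝ) (g := ℓ t x) (x := π t x) (hii.apply_eq t x), hneg]
  · congr 1
    ring
  intro ρ
  by_cases htop : ℓ t x ρ = ⊤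
  · simp [htop]
  have hle : (u t.castSucc x : EReal) ≤ ℓ t x ρ + γ t.castSucc x +
      ((∑ y, ρ y * (α t x y * P t + u t.succ y) : ℝ) : EReal) :=
    (hi.1 t x).le.trans (iInf₂_le ρ (hdom ρ htop))
  refine le_of_eq_of_le ?_ (EReal.sub_le_of_le_add (EReal.sub_le_of_le_add hle))
  rw [← EReal.coe_sub, ← EReal.coe_sub, hneg, hneg]
  congr 1
  ring

theorem MFGii.persp_eq (h : MFGii ℓ α π γ P u) {t : Fin T} {x : Fin n}
    (hm : 0 ≤ m t.castSucc x) :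
    persp (ℓ t x) (m t.castSucc x) (fun y => m t.castSucc x * π t x y) =
      ((∑ y, m t.castSucc x * π t x y * -(α t x y * P t + u t.succ y) -
        m t.castSucc x * (γ t.castSucc x - u t.castSucc x) : ℝ) : EReal) := by
  rw [show (fun y => m t.castSucc x * π t x y) = m t.castSucc x • π t x from rfl,
    persp_smul _ hm, h.apply_eq, ← EReal.coe_mul]
  congr 1
  simp only [mul_neg, Finset.sum_neg_distrib, mul_assoc, ← Finset.mul_sum]
  ring

theorem IsMFGSol.isDP (hdom : ∀ t x ρ, ℓ t x ρ ≠ ⊤ → ρ ∈ simplex n)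
    (h : IsMFGSol ℓ F φ α m0 m π u γ P) : IsDP ℓ α γ P u :=
  ⟨fun t x => by rw [dpCost_eq_of_MFG (hdom t x) h.2.1 h.2.2.1, ← EReal.coe_add, add_sub_cancel],
    h.2.1.2⟩

theorem IsMFGSol.hasZeroDualityGap (hm0 : m0 ∈ simplex n)
    (hdom : ∀ t x ρ, ℓ t x ρ ≠ ⊤ → ρ ∈ simplex n) (hF : ∀ s z, F s z ≠ ⊥)
    (hφ : ∀ t z, φ t z ≠ ⊥) (h : IsMFGSol ℓ F φ α m0 m π u γ P) :
    HasZeroDualityGap ℓ F φ α m0 m (fun t x y => m t.castSucc x * π t x y) u γ P := by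
  have hk := h.isDP hdom
  obtain ⟨hπ, hi, hii, hK, hγ, hP⟩ := h
  choose qφ hqφ using fun t => conjR_eq_of_mem_subdiffR (hφ t _) (hP t)
  choose qF hqF using fun s => conjFn_eq_of_mem_subdiffFn (hF s _) (hγ s)
  set w : Wsp T n := fun t x y => m t.castSucc x * π t x y
  set L : Fin T → Fin n → ℝ := fun t x => ∑ y, w t x y * -(α t x y * P t + u t.succ y) -
    m t.castSucc x * (γ t.castSucc x - u t.castSucc x)
  have hpersp : ∀ t x, persp (ℓ t x) (m t.castSucc x) (w t x) = L t x :=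
    fun t x => hii.persp_eq (hK.nonneg hm0 hπ _ _)
  have hgap := cpair_neg_AstarOp_of_Aop_eq (hK.feasPt.Aop_eq α) (u, γ, P)
  rw [cpair_neg_AstarOp_eq α _ P hi.2] at hgap
  refine ⟨hK.feasPt, hk, ∑ t, ∑ x, L t x + ∑ t, qφ t + ∑ s, qF s,
    ∑ t, opA α w t * P t - ∑ t, qφ t, ∑ s, ∑ x, m s x * γ s x - ∑ s, qF s, ?_, ?_, ?_, ?_⟩
  · rw [Jtil, Finset.sum_congr rfl fun t _ => Finset.sum_congr rfl fun x _ => hpersp t x,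
      Finset.sum_congr rfl fun t _ => show φ t (opA α w t) = _ from (hqφ t).1,
      Finset.sum_congr rfl fun s _ => (hqF s).1]
    simp only [EReal.coe_add, EReal.coe_finset_sum]
  · rw [Finset.sum_congr rfl fun t _ => (hqφ t).2, ← Finset.sum_sub_distrib]
    simp only [EReal.coe_finset_sum]
    rfl
  · rw [Finset.sum_congr rfl fun s _ => (hqF s).2, ← Finset.sum_sub_distrib]
    simp only [EReal.coe_finset_sum]
  · dsimp only at hgap
    linarith

end MFG

theorem mfg_to_potential_general {T n : ℕ}
    (ℓ : LSp T n) (F : FSp T n) (φ : PhiSp T) (α : ASp T n)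
    (m0 : Fin n → ℝ) (hm0 : m0 ∈ simplex n)
    (hconv : ConvAssumption ℓ F φ)
    (m : Msp T n) (π : Wsp T n) (u γ : Msp T n) (P : Psp T)
    (hsol : IsMFGSol ℓ F φ α m0 m π u γ P)
    (w : Wsp T n) (hw : ∀ t x y, w t x y = m t.castSucc x * π t x y)
    (D : Psp T) (hD : ∀ t, D t = opA α w t) :
    IsSolPfrak ℓ F φ α m0 (m, w, m, D) ∧
    IsSolDfrak ℓ F φ α m0 (u, γ, P) ∧
    IsSolPt ℓ F φ α m0 (m, w) ∧
    IsSolP ℓ F φ α m0 (m, π) ∧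
    IsSolDt ℓ F φ α m0 γ P u := by
  obtain ⟨hℓ, hF, hφ⟩ := hconv
  obtain rfl : w = fun t x y => m t.castSucc x * π t x y :=
    funext fun t => funext fun x => funext (hw t x)
  obtain rfl : D = opA α _ := funext hD
  have hFp : ∀ s, EProper (F s) := fun s => (hF s).1
  have hφp : ∀ t, EProper (φ t) := fun t => (hφ t).1
  have hgap := hsol.hasZeroDualityGap hm0 (fun t x => (hℓ t x).2.2.2) (fun s => (hFp s).2)
    (fun t => (hφp t).2)
  exact ⟨hgap.isSolPfrak (fun t x => (hℓ t x).1.2) hFp hφp, hgap.isSolDfrak hFp hφp,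
    hgap.isSolPt hFp hφp, (hgap.isSolPt hFp hφp).isSolP hm0 hsol.1 hsol.2.2.2.1,
    hgap.isSolDt hFp hφp⟩

/-- Proposition 1: from a solution of the MFG system one obtains
solutions of (𝔓), (𝔇), (P̃), (P) and (D̃). -/
theorem mfg_to_potential {T n : ℕ} (hT : 1 ≤ T) (hn : 1 ≤ n)
    (ℓ : LSp T n) (F : FSp T n) (φ : PhiSp T) (α : ASp T n)
    (m0 : Fin n → ℝ) (hm0 : m0 ∈ simplex n)
    (hconv : ConvAssumption ℓ F φ) (hqual : Qualif ℓ F φ α m0)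
    (m : Msp T n) (π : Wsp T n) (u γ : Msp T n) (P : Psp T)
    (hsol : IsMFGSol ℓ F φ α m0 m π u γ P)
    (w : Wsp T n) (hw : ∀ t x y, w t x y = m t.castSucc x * π t x y)
    (D : Psp T) (hD : ∀ t, D t = opA α w t) :
    IsSolPfrak ℓ F φ α m0 (m, w, m, D) ∧
    IsSolDfrak ℓ F φ α m0 (u, γ, P) ∧
    IsSolPt ℓ F φ α m0 (m, w) ∧
    IsSolP ℓ F φ α m0 (m, π) ∧
    IsSolDt ℓ F φ α m0 γ P u :=
  mfg_to_potential_general ℓ F φ α m0 hm0 hconv m π u γ P hsol w hw D hD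

end
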